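/- Let A be a finite nonempty set and let C be a collection of equivalence relations on A containing the equality relation 0 and the all relation 1, closed under intersection, such that for all α, β ∈ C the relational composition α∘β lies in C and equals β∘α, and such that A is directly indecomposable with respect to C (no α, β ∈ C \ {0} satisfy α ∩ β = 0 and α∘β = 1). Assume further that C is congruence slim: every element of C \ {0,1} is maximal or minimal. Then one of the following holds: (i) C is a chain with at most 4 elements; (ii) C has a unique minimal element μ, every other element of C \ {0,1} is maximal and contains μ, and C = {0, μ, 1} ∪ Max(C); (iii) C has a unique maximal element ν, every other element of C \ {0,1} is minimal and is contained in ν, and C = {0, ν, 1} ∪ Min(C). -/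

import Mathlib

/-- `α` is a minimal element of `C \ {⊥, ⊤}`: the only element of `C` strictly below it
is the equality relation `⊥`. -/
def IsMinIn {A : Type*} (C : Set (Setoid A)) (α : Setoid A) : Prop :=
  α ∈ C ∧ α ≠ ⊥ ∧ α ≠ ⊤ ∧ ∀ β ∈ C, β < α → β = ⊥

/-- `α` is a maximal element of `C \ {⊥, ⊤}`: the only element of `C` strictly above it
is the all relation `⊤`. -/
def IsMaxIn {A : Type*} (C : Set (Setoid A)) (α : Setoid A) : Prop :=
  α ∈ C ∧ α ≠ ⊥ ∧ α ≠ ⊤ ∧ ∀ β ∈ C, α < β → β = ⊤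

/-! A relational product `α ∘ β` that is again an equivalence relation is the join `α ⊔ β`,
so `C` is a sublattice of `Setoid A` in which no two nonzero elements are complements. Then
every minimal element lies below every maximal one: otherwise `μ ⊓ ν = ⊥` and `μ ⊔ ν = ⊤`.
Slimness forces the join of two distinct minimal elements to be maximal, and then it lies above
every maximal element, so it is the unique one; dually for two distinct maximal elements. If
there is at most one minimal and at most one maximal element, `C ⊆ {⊥, μ, ν, ⊤}` with
`μ ≤ ν`. -/

section

variable {A : Type*} {C : Set (Setoid A)} {α β γ : Setoid A}

theorem Setoid.eq_sup_of_r_eq_comp (h : γ.r = Relation.Comp α.r β.r) : γ = α ⊔ β := by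
  refine le_antisymm (Setoid.le_def.mpr fun {x y} hxy => ?_) (sup_le ?_ ?_)
  · obtain ⟨z, hxz, hzy⟩ : Relation.Comp α.r β.r x y := h ▸ hxy
    exact (α ⊔ β).trans (le_sup_left (a := α) (b := β) hxz) (le_sup_right (a := α) hzy)
  · exact Setoid.le_def.mpr fun {x y} hxy => show γ.r x y from h ▸ ⟨y, hxy, β.refl y⟩
  · exact Setoid.le_def.mpr fun {x y} hxy => show γ.r x y from h ▸ ⟨x, α.refl x, hxy⟩

theorem IsMinIn.eq_of_le (hα : IsMinIn C α) (hβ : β ∈ C) (hβ0 : β ≠ ⊥) (h : β ≤ α) :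
    β = α :=
  by_contra fun hne => hβ0 (hα.2.2.2 β hβ (lt_of_le_of_ne h hne))

theorem IsMaxIn.eq_of_le (hα : IsMaxIn C α) (hβ : β ∈ C) (hβ1 : β ≠ ⊤) (h : α ≤ β) :
    α = β :=
  by_contra fun hne => hβ1 (hα.2.2.2 β hβ (lt_of_le_of_ne h hne))

theorem IsMinIn.inf_eq_bot (hα : IsMinIn C α) (hβ : IsMinIn C β) (hne : α ≠ β)
    (hmem : α ⊓ β ∈ C) : α ⊓ β = ⊥ :=
  by_contra fun h => hne <|
    (hα.eq_of_le hmem h inf_le_left).symm.trans (hβ.eq_of_le hmem h inf_le_right)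

theorem IsMaxIn.sup_eq_top (hα : IsMaxIn C α) (hβ : IsMaxIn C β) (hne : α ≠ β)
    (hmem : α ⊔ β ∈ C) : α ⊔ β = ⊤ :=
  by_contra fun h => hne <|
    (hα.eq_of_le hmem h le_sup_left).trans (hβ.eq_of_le hmem h le_sup_right).symm

def IsSlim (C : Set (Setoid A)) : Prop :=
  ∀ α ∈ C, α ≠ ⊥ → α ≠ ⊤ → IsMaxIn C α ∨ IsMinIn C α

theorem eq_bot_or_eq_top_or_isMaxIn_or_isMinIn (hslim : IsSlim C) (hα : α ∈ C) :
    α = ⊥ ∨ α = ⊤ ∨ IsMaxIn C α ∨ IsMinIn C α := by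
  by_cases h0 : α = ⊥
  · exact Or.inl h0
  by_cases h1 : α = ⊤
  · exact Or.inr (Or.inl h1)
  exact Or.inr (Or.inr (hslim α hα h0 h1))

theorem eq_union_setOf_isMinIn_of_unique_isMaxIn (hbot : ⊥ ∈ C) (htop : ⊤ ∈ C) (hslim : IsSlim C)
    (hγ : IsMaxIn C γ) (huniq : ∀ β, IsMaxIn C β → β = γ) :
    C = {⊥, γ, ⊤} ∪ {α | IsMinIn C α} := by
  ext α
  refine ⟨fun hα => ?_, ?_⟩
  · rcases eq_bot_or_eq_top_or_isMaxIn_or_isMinIn hslim hα with h | h | h | h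
    · exact Or.inl (Or.inl h)
    · exact Or.inl (Or.inr (Or.inr h))
    · exact Or.inl (Or.inr (Or.inl (huniq α h)))
    · exact Or.inr h
  · rintro ((rfl | rfl | rfl) | h)
    exacts [hbot, hγ.1, htop, h.1]

theorem eq_union_setOf_isMaxIn_of_unique_isMinIn (hbot : ⊥ ∈ C) (htop : ⊤ ∈ C) (hslim : IsSlim C)
    (hγ : IsMinIn C γ) (huniq : ∀ β, IsMinIn C β → β = γ) :
    C = {⊥, γ, ⊤} ∪ {α | IsMaxIn C α} := by
  ext α
  refine ⟨fun hα => ?_, ?_⟩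
  · rcases eq_bot_or_eq_top_or_isMaxIn_or_isMinIn hslim hα with h | h | h | h
    · exact Or.inl (Or.inl h)
    · exact Or.inl (Or.inr (Or.inr h))
    · exact Or.inr h
    · exact Or.inl (Or.inr (Or.inl (huniq α h)))
  · rintro ((rfl | rfl | rfl) | h)
    exacts [hbot, hγ.1, htop, h.1]

theorem ncard_le_four_of_subsingleton (hslim : IsSlim C)
    (hmin : {α | IsMinIn C α}.Subsingleton) (hmax : {α | IsMaxIn C α}.Subsingleton) :
    C.ncard ≤ 4 := by
  have hsub : C ⊆ {⊥, ⊤} ∪ {α | IsMaxIn C α} ∪ {α | IsMinIn C α} := fun α hα => by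
    rcases eq_bot_or_eq_top_or_isMaxIn_or_isMinIn hslim hα with h | h | h | h
    · exact Or.inl (Or.inl (Or.inl h))
    · exact Or.inl (Or.inl (Or.inr h))
    · exact Or.inl (Or.inr h)
    · exact Or.inr h
  have hpair : ({⊥, ⊤} : Set (Setoid A)).ncard ≤ 2 :=
    (Set.ncard_insert_le _ _).trans (by rw [Set.ncard_singleton])
  have hfin := ((Set.toFinite {⊥, ⊤}).union hmax.finite).union hmin.finite
  calc C.ncard ≤ ({⊥, ⊤} ∪ {α | IsMaxIn C α} ∪ {α | IsMinIn C α}).ncard :=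
        Set.ncard_le_ncard hsub hfin
    _ ≤ ({⊥, ⊤} : Set (Setoid A)).ncard + {α | IsMaxIn C α}.ncard
          + {α | IsMinIn C α}.ncard :=
        (Set.ncard_union_le _ _).trans (Nat.add_le_add_right (Set.ncard_union_le _ _) _)
    _ ≤ 2 + 1 + 1 := by
      gcongr
      exacts [(Set.ncard_le_one hmax.finite).mpr fun _ ha _ hb => hmax ha hb,
        (Set.ncard_le_one hmin.finite).mpr fun _ ha _ hb => hmin ha hb]

structure IsIndecomposableSublattice (C : Set (Setoid A)) : Prop where
  inf_mem : ∀ α ∈ C, ∀ β ∈ C, α ⊓ β ∈ C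
  sup_mem : ∀ α ∈ C, ∀ β ∈ C, α ⊔ β ∈ C
  sup_ne_top : ∀ α ∈ C, ∀ β ∈ C, α ≠ ⊥ → β ≠ ⊥ → α ⊓ β = ⊥ → α ⊔ β ≠ ⊤

namespace IsIndecomposableSublattice

theorem le_of_isMinIn_of_isMaxIn (hC : IsIndecomposableSublattice C) (hμ : IsMinIn C α)
    (hν : IsMaxIn C β) : α ≤ β := by
  by_contra h
  have hinf : α ⊓ β = ⊥ := hμ.2.2.2 _ (hC.inf_mem _ hμ.1 _ hν.1) (inf_lt_left.mpr h)
  have hsup : α ⊔ β = ⊤ := hν.2.2.2 _ (hC.sup_mem _ hμ.1 _ hν.1) (right_lt_sup.mpr h)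
  exact hC.sup_ne_top _ hμ.1 _ hν.1 hμ.2.1 hν.2.1 hinf hsup

theorem isMaxIn_sup (hC : IsIndecomposableSublattice C) (hslim : IsSlim C)
    (hα : IsMinIn C α) (hβ : IsMinIn C β) (hne : α ≠ β) : IsMaxIn C (α ⊔ β) := by
  have hmem := hC.sup_mem _ hα.1 _ hβ.1
  have h0 : α ⊔ β ≠ ⊥ := fun h => hα.2.1 (le_bot_iff.mp (h ▸ le_sup_left))
  have h1 : α ⊔ β ≠ ⊤ := hC.sup_ne_top _ hα.1 _ hβ.1 hα.2.1 hβ.2.1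
    (hα.inf_eq_bot hβ hne (hC.inf_mem _ hα.1 _ hβ.1))
  refine (hslim _ hmem h0 h1).resolve_right fun hmin => hne ?_
  exact (hmin.eq_of_le hα.1 hα.2.1 le_sup_left).trans
    (hmin.eq_of_le hβ.1 hβ.2.1 le_sup_right).symm

theorem isMinIn_inf (hC : IsIndecomposableSublattice C) (hslim : IsSlim C)
    (hα : IsMaxIn C α) (hβ : IsMaxIn C β) (hne : α ≠ β) : IsMinIn C (α ⊓ β) := by
  have hmem := hC.inf_mem _ hα.1 _ hβ.1
  have h0 : α ⊓ β ≠ ⊥ := fun h => hC.sup_ne_top _ hα.1 _ hβ.1 hα.2.1 hβ.2.1 h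
    (hα.sup_eq_top hβ hne (hC.sup_mem _ hα.1 _ hβ.1))
  have h1 : α ⊓ β ≠ ⊤ := fun h => hα.2.2.1 (top_le_iff.mp (h ▸ inf_le_left))
  refine (hslim _ hmem h0 h1).resolve_left fun hmax => hne ?_
  exact (hmax.eq_of_le hα.1 hα.2.2.1 inf_le_left).symm.trans
    (hmax.eq_of_le hβ.1 hβ.2.2.1 inf_le_right)

theorem eq_sup_of_isMaxIn (hC : IsIndecomposableSublattice C) (hslim : IsSlim C)
    (hα : IsMinIn C α) (hβ : IsMinIn C β) (hne : α ≠ β) (hγ : IsMaxIn C γ) : γ = α ⊔ β :=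
  ((hC.isMaxIn_sup hslim hα hβ hne).eq_of_le hγ.1 hγ.2.2.1
    (sup_le (hC.le_of_isMinIn_of_isMaxIn hα hγ) (hC.le_of_isMinIn_of_isMaxIn hβ hγ))).symm

theorem eq_inf_of_isMinIn (hC : IsIndecomposableSublattice C) (hslim : IsSlim C)
    (hα : IsMaxIn C α) (hβ : IsMaxIn C β) (hne : α ≠ β) (hγ : IsMinIn C γ) : γ = α ⊓ β :=
  (hC.isMinIn_inf hslim hα hβ hne).eq_of_le hγ.1 hγ.2.1
    (le_inf (hC.le_of_isMinIn_of_isMaxIn hγ hα) (hC.le_of_isMinIn_of_isMaxIn hγ hβ))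

theorem isMinIn_and_le_of_unique_isMaxIn (hC : IsIndecomposableSublattice C) (hslim : IsSlim C)
    (hγ : IsMaxIn C γ) (huniq : ∀ β, IsMaxIn C β → β = γ) :
    ∀ α ∈ C, α ≠ ⊥ → α ≠ ⊤ → α ≠ γ → IsMinIn C α ∧ α ≤ γ := fun α hα h0 h1 hne =>
  have hmin := (hslim α hα h0 h1).resolve_left fun h => hne (huniq α h)
  ⟨hmin, hC.le_of_isMinIn_of_isMaxIn hmin hγ⟩

theorem isMaxIn_and_le_of_unique_isMinIn (hC : IsIndecomposableSublattice C) (hslim : IsSlim C)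
    (hγ : IsMinIn C γ) (huniq : ∀ β, IsMinIn C β → β = γ) :
    ∀ α ∈ C, α ≠ ⊥ → α ≠ ⊤ → α ≠ γ → IsMaxIn C α ∧ γ ≤ α := fun α hα h0 h1 hne =>
  have hmax := (hslim α hα h0 h1).resolve_right fun h => hne (huniq α h)
  ⟨hmax, hC.le_of_isMinIn_of_isMaxIn hγ hmax⟩

theorem le_total_of_subsingleton (hC : IsIndecomposableSublattice C) (hslim : IsSlim C)
    (hmin : {α | IsMinIn C α}.Subsingleton) (hmax : {α | IsMaxIn C α}.Subsingleton) :
    ∀ α ∈ C, ∀ β ∈ C, α ≤ β ∨ β ≤ α := by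
  intro α hα β hβ
  rcases eq_bot_or_eq_top_or_isMaxIn_or_isMinIn hslim hα with rfl | rfl | hα | hα <;>
  rcases eq_bot_or_eq_top_or_isMaxIn_or_isMinIn hslim hβ with rfl | rfl | hβ | hβ <;>
  first
    | exact Or.inl bot_le | exact Or.inr bot_le | exact Or.inl le_top | exact Or.inr le_top
    | exact Or.inl (hmax hα hβ).le | exact Or.inl (hmin hα hβ).le
    | exact Or.inl (hC.le_of_isMinIn_of_isMaxIn hα hβ)
    | exact Or.inr (hC.le_of_isMinIn_of_isMaxIn hβ hα)

end IsIndecomposableSublattice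

end

theorem stmt1_general {A : Type*} (C : Set (Setoid A))
    (hbot : ⊥ ∈ C) (htop : ⊤ ∈ C)
    (hinf : ∀ α ∈ C, ∀ β ∈ C, α ⊓ β ∈ C)
    (hcompMem : ∀ α ∈ C, ∀ β ∈ C, ∃ γ ∈ C, γ.r = Relation.Comp α.r β.r)
    (hind : ¬ ∃ α ∈ C, ∃ β ∈ C, α ≠ ⊥ ∧ β ≠ ⊥ ∧ α ⊓ β = ⊥ ∧
      Relation.Comp α.r β.r = fun _ _ => True)
    (hslim : ∀ α ∈ C, α ≠ ⊥ → α ≠ ⊤ → IsMaxIn C α ∨ IsMinIn C α) :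
    ((∀ α ∈ C, ∀ β ∈ C, α ≤ β ∨ β ≤ α) ∧ C.ncard ≤ 4) ∨
    (∃ μ, IsMinIn C μ ∧ (∀ β, IsMinIn C β → β = μ) ∧
      (∀ α ∈ C, α ≠ ⊥ → α ≠ ⊤ → α ≠ μ → IsMaxIn C α ∧ μ ≤ α) ∧
      C = {⊥, μ, ⊤} ∪ {α | IsMaxIn C α}) ∨
    (∃ ν, IsMaxIn C ν ∧ (∀ β, IsMaxIn C β → β = ν) ∧
      (∀ α ∈ C, α ≠ ⊥ → α ≠ ⊤ → α ≠ ν → IsMinIn C α ∧ α ≤ ν) ∧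
      C = {⊥, ν, ⊤} ∪ {α | IsMinIn C α}) := by
  have hC : IsIndecomposableSublattice C := by
    refine ⟨hinf, fun α hα β hβ => ?_, fun α hα β hβ hα0 hβ0 hmeet hjoin => ?_⟩
    · obtain ⟨γ, hγ, hcomp⟩ := hcompMem α hα β hβ
      exact Setoid.eq_sup_of_r_eq_comp hcomp ▸ hγ
    · obtain ⟨γ, -, hcomp⟩ := hcompMem α hα β hβ
      refine hind ⟨α, hα, β, hβ, hα0, hβ0, hmeet, ?_⟩
      rw [← hcomp, Setoid.eq_sup_of_r_eq_comp hcomp, hjoin]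
      rfl
  by_cases hmin : {α | IsMinIn C α}.Subsingleton
  · by_cases hmax : {α | IsMaxIn C α}.Subsingleton
    · exact Or.inl ⟨hC.le_total_of_subsingleton hslim hmin hmax,
        ncard_le_four_of_subsingleton hslim hmin hmax⟩
    obtain ⟨α, hα, β, hβ, hne⟩ := Set.not_subsingleton_iff.mp hmax
    have hμ := hC.isMinIn_inf hslim hα hβ hne
    have huniq := fun γ => hC.eq_inf_of_isMinIn hslim hα hβ hne (γ := γ)
    exact Or.inr (Or.inl ⟨_, hμ, huniq, hC.isMaxIn_and_le_of_unique_isMinIn hslim hμ huniq,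
      eq_union_setOf_isMaxIn_of_unique_isMinIn hbot htop hslim hμ huniq⟩)
  obtain ⟨α, hα, β, hβ, hne⟩ := Set.not_subsingleton_iff.mp hmin
  have hν := hC.isMaxIn_sup hslim hα hβ hne
  have huniq := fun γ => hC.eq_sup_of_isMaxIn hslim hα hβ hne (γ := γ)
  exact Or.inr (Or.inr ⟨_, hν, huniq, hC.isMinIn_and_le_of_unique_isMaxIn hslim hν huniq,
    eq_union_setOf_isMinIn_of_unique_isMaxIn hbot htop hslim hν huniq⟩)

theorem stmt1 {A : Type*} [Finite A] [Nonempty A] (C : Set (Setoid A))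
    (hbot : ⊥ ∈ C) (htop : ⊤ ∈ C)
    (hinf : ∀ α ∈ C, ∀ β ∈ C, α ⊓ β ∈ C)
    (hcompMem : ∀ α ∈ C, ∀ β ∈ C, ∃ γ ∈ C, γ.r = Relation.Comp α.r β.r)
    (hcompComm : ∀ α ∈ C, ∀ β ∈ C, Relation.Comp α.r β.r = Relation.Comp β.r α.r)
    (hind : ¬ ∃ α ∈ C, ∃ β ∈ C, α ≠ ⊥ ∧ β ≠ ⊥ ∧ α ⊓ β = ⊥ ∧
      Relation.Comp α.r β.r = fun _ _ => True)
    (hslim : ∀ α ∈ C, α ≠ ⊥ → α ≠ ⊤ → IsMaxIn C α ∨ IsMinIn C α) :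
    ((∀ α ∈ C, ∀ β ∈ C, α ≤ β ∨ β ≤ α) ∧ C.ncard ≤ 4) ∨
    (∃ μ, IsMinIn C μ ∧ (∀ β, IsMinIn C β → β = μ) ∧
      (∀ α ∈ C, α ≠ ⊥ → α ≠ ⊤ → α ≠ μ → IsMaxIn C α ∧ μ ≤ α) ∧
      C = {⊥, μ, ⊤} ∪ {α | IsMaxIn C α}) ∨
    (∃ ν, IsMaxIn C ν ∧ (∀ β, IsMaxIn C β → β = ν) ∧
      (∀ α ∈ C, α ≠ ⊥ → α ≠ ⊤ → α ≠ ν → IsMinIn C α ∧ α ≤ ν) ∧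
      C = {⊥, ν, ⊤} ∪ {α | IsMinIn C α}) :=
  stmt1_general C hbot htop hinf hcompMem hind hslim
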